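/- With notation as above, the expected improvement E[max(0, T − Y)] for Y ~ N(ŷ, s²), s > 0, is strictly positive for all values of ŷ and T, and is a strictly increasing function of s when ŷ ≥ T. -/

import Mathlib

/-!
Writing `Y = ŷ + s Z` with `Z ~ N(0, 1)`, the expected improvement is `∫ max 0 (c - s z) dN(0, 1)(z)`
with `c = T - ŷ`. The integrand is continuous, nonnegative and not identically zero, and the
standard Gaussian charges every nonempty open set, so the integral is positive. When `c ≤ 0` the
integrand is pointwise nondecreasing in `s ≥ 0` (it vanishes for `z > 0`) and strictly increasing
at some `z < 0`, which gives strict monotonicity by the same positivity argument.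
-/

open MeasureTheory ProbabilityTheory

/-- Expected improvement of a Gaussian prediction `N(yhat, s²)` over target `T`. -/
noncomputable def expectedImprovement (yhat s T : ℝ) : ℝ :=
  ∫ y, max 0 (T - y) ∂(gaussianReal yhat (Real.toNNReal (s ^ 2)))

instance isOpenPosMeasure_gaussianReal_one (m : ℝ) : (gaussianReal m 1).IsOpenPosMeasure :=
  (gaussianReal_absolutelyContinuous' m one_ne_zero).isOpenPosMeasure

theorem gaussianReal_eq_map_std (m s : ℝ) :
    gaussianReal m (Real.toNNReal (s ^ 2)) = (gaussianReal 0 1).map (fun z => s * z + m) := by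
  have hscale : (gaussianReal 0 1).map (s * ·) = gaussianReal 0 (Real.toNNReal (s ^ 2)) := by
    rw [gaussianReal_map_const_mul, mul_zero, mul_one]
    exact congrArg _ (NNReal.eq (by simp [sq_nonneg]))
  change _ = (gaussianReal 0 1).map ((· + m) ∘ (s * ·))
  rw [← Measure.map_map (measurable_add_const m) (measurable_const_mul s), hscale,
    gaussianReal_map_add_const, zero_add]

theorem expectedImprovement_eq_integral_std (yhat s T : ℝ) :
    expectedImprovement yhat s T = ∫ z, max 0 ((T - yhat) - s * z) ∂gaussianReal 0 1 := by
  rw [expectedImprovement, gaussianReal_eq_map_std, integral_map (by fun_prop) (by fun_prop)]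
  simp only [sub_add_eq_sub_sub_swap]

theorem integral_lt_integral_of_continuous_of_le_of_lt {X : Type*} [TopologicalSpace X]
    [MeasurableSpace X] {μ : Measure X} [μ.IsOpenPosMeasure] {f g : X → ℝ} {x : X}
    (hf : Continuous f) (hg : Continuous g) (hfi : Integrable f μ) (hgi : Integrable g μ)
    (hle : f ≤ g) (hlt : f x < g x) : ∫ y, f y ∂μ < ∫ y, g y ∂μ := by
  rw [← sub_pos, ← integral_sub hgi hfi]
  exact integral_pos_of_integrable_nonneg_nonzero (hg.sub hf) (hgi.sub hfi)
    (fun y => sub_nonneg.2 (hle y)) (sub_pos.2 hlt).ne'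

theorem max_zero_sub_mul_le_of_le {c s₁ s₂ z : ℝ} (hc : c ≤ 0) (hs₁ : 0 ≤ s₁) (hs : s₁ ≤ s₂) :
    max 0 (c - s₁ * z) ≤ max 0 (c - s₂ * z) := by
  rcases le_or_gt z 0 with hz | hz
  · exact max_le_max le_rfl (by nlinarith)
  · rw [max_eq_left (by nlinarith : c - s₁ * z ≤ 0)]
    exact le_max_left _ _

section HingeIntegral

variable {μ : Measure ℝ} [IsFiniteMeasure μ]

theorem integrable_max_zero_sub_mul (hμ : Integrable id μ) (c s : ℝ) :
    Integrable (fun z => max 0 (c - s * z)) μ :=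
  ((integrable_const c).sub (hμ.const_mul s)).pos_part.congr (.of_forall fun _ => max_comm _ _)

variable [μ.IsOpenPosMeasure]

theorem integral_max_zero_sub_mul_pos (hμ : Integrable id μ) (c : ℝ) {s : ℝ} (hs : s ≠ 0) :
    0 < ∫ z, max 0 (c - s * z) ∂μ := by
  have hone : c - s * ((c - 1) / s) = 1 := by field_simp; ring
  simpa using integral_lt_integral_of_continuous_of_le_of_lt (x := (c - 1) / s)
    continuous_const (by fun_prop) (integrable_const 0) (integrable_max_zero_sub_mul hμ c s)
    (fun z => le_max_left 0 _) (by simp [hone])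

theorem strictMonoOn_integral_max_zero_sub_mul (hμ : Integrable id μ) {c : ℝ} (hc : c ≤ 0) :
    StrictMonoOn (fun s => ∫ z, max 0 (c - s * z) ∂μ) (Set.Ici 0) := by
  intro s₁ hs₁ s₂ _ h12
  have hs₂ : 0 < s₂ := lt_of_le_of_lt hs₁ h12
  -- at `z = (c - 1) / s₂ < 0` the larger slope reaches `1`, the smaller one stays below
  have hone : c - s₂ * ((c - 1) / s₂) = 1 := by field_simp; ring
  refine integral_lt_integral_of_continuous_of_le_of_lt (x := (c - 1) / s₂) (by fun_prop)
    (by fun_prop) (integrable_max_zero_sub_mul hμ c s₁) (integrable_max_zero_sub_mul hμ c s₂)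
    (fun z => max_zero_sub_mul_le_of_le hc hs₁ h12.le) ?_
  have hneg : (c - 1) / s₂ < 0 := div_neg_of_neg_of_pos (by linarith) hs₂
  rw [hone, max_eq_right zero_le_one]
  exact max_lt zero_lt_one (by nlinarith)

end HingeIntegral

theorem expected_improvement_pos_and_mono (yhat T : ℝ) :
    (∀ s : ℝ, 0 < s → 0 < expectedImprovement yhat s T) ∧
    (T ≤ yhat →
      StrictMonoOn (fun s : ℝ => expectedImprovement yhat s T) (Set.Ioi 0)) := by
  have hμ : Integrable id (gaussianReal 0 1) := (memLp_id_gaussianReal 1).integrable le_rfl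
  simp_rw [expectedImprovement_eq_integral_std]
  exact ⟨fun s hs => integral_max_zero_sub_mul_pos hμ _ hs.ne',
    fun hT => (strictMonoOn_integral_max_zero_sub_mul hμ (sub_nonpos.2 hT)).mono
      Set.Ioi_subset_Ici_self⟩
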